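/- arXiv:0706.2368 — 3 statements merged into one kernel-verified Lean document; each statement's English description precedes it below -/
import Mathlib

section
/- (Carleman's inequality.) For every sequence (a_n)_{n≥1} of non-negative real numbers with ∑_{n=1}^∞ a_n convergent, one has ∑_{n=1}^∞ (∏_{k=1}^n a_k)^{1/n} ≤ e · ∑_{n=1}^∞ a_n. -/
/-!
Pólya's proof. The weights `c k = k (1 + 1/k)^k` satisfy `c 1 ⋯ c n = (n + 1)^n` and `c k ≤ k e`.
AM–GM applied to `c 1 a 1, …, c n a n` gives
`(a 1 ⋯ a n)^(1/n) ≤ ∑_{k ≤ n} c k a k / (n (n + 1))`; summing over `n` and exchanging the sums,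
`a k` receives the coefficient `c k ∑_{n ≥ k} 1 / (n (n + 1)) ≤ c k / k ≤ e`.
-/

open Finset Real

noncomputable def carlemanWeight (k : ℕ) : ℝ := k * (1 + (k : ℝ)⁻¹) ^ k

lemma carlemanWeight_nonneg (k : ℕ) : 0 ≤ carlemanWeight k := by
  unfold carlemanWeight; positivity

lemma carlemanWeight_le (k : ℕ) : carlemanWeight k ≤ k * exp 1 :=
  mul_le_mul_of_nonneg_left one_add_inv_pow_le_exp k.cast_nonneg

lemma prod_carlemanWeight (n : ℕ) : ∏ k ∈ Icc 1 n, carlemanWeight k = ((n : ℝ) + 1) ^ n := by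
  induction n with
  | zero => simp
  | succ n ih =>
    have hsucc : ((n + 1 : ℕ) : ℝ) * (1 + ((n + 1 : ℕ) : ℝ)⁻¹) = (n + 1 : ℕ) + 1 := by
      field_simp
    rw [prod_Icc_succ_top (by omega), ih, carlemanWeight, ← hsucc, mul_pow]
    push_cast
    ring

lemma sum_Ico_inv_mul_succ {k m : ℕ} (hk : 0 < k) (hkm : k ≤ m) :
    ∑ n ∈ Ico k m, ((n : ℝ) * (n + 1))⁻¹ = (k : ℝ)⁻¹ - (m : ℝ)⁻¹ := by
  induction m, hkm using Nat.le_induction with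
  | base => simp
  | succ m hkm ih =>
    have hm : (0 : ℝ) < m := by exact_mod_cast hk.trans_le hkm
    rw [sum_Ico_succ_top hkm, ih]
    push_cast
    field_simp
    ring

lemma sum_Ico_inv_mul_succ_le {k : ℕ} (hk : 0 < k) (m : ℕ) :
    ∑ n ∈ Ico k m, ((n : ℝ) * (n + 1))⁻¹ ≤ (k : ℝ)⁻¹ := by
  rcases le_or_gt k m with hkm | hmk
  · rw [sum_Ico_inv_mul_succ hk hkm]
    exact sub_le_self _ (by positivity)
  · rw [Ico_eq_empty_of_le hmk.le, sum_empty]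
    positivity

lemma carlemanWeight_mul_sum_Ico_le {k : ℕ} (hk : 0 < k) (m : ℕ) :
    carlemanWeight k * ∑ n ∈ Ico k m, ((n : ℝ) * (n + 1))⁻¹ ≤ exp 1 := by
  have hk' : (0 : ℝ) < k := by exact_mod_cast hk
  calc carlemanWeight k * ∑ n ∈ Ico k m, ((n : ℝ) * (n + 1))⁻¹
      ≤ (k * exp 1) * (k : ℝ)⁻¹ :=
        mul_le_mul (carlemanWeight_le k) (sum_Ico_inv_mul_succ_le hk m)
          (sum_nonneg fun n _ => by positivity) (by positivity)
    _ = exp 1 := by field_simp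

lemma geom_mean_le_sum_carlemanWeight_mul {a : ℕ → ℝ} {n : ℕ} (hn : n ≠ 0)
    (ha : ∀ k ∈ Icc 1 n, 0 ≤ a k) :
    (∏ k ∈ Icc 1 n, a k) ^ (n : ℝ)⁻¹ ≤
      ∑ k ∈ Icc 1 n, carlemanWeight k * a k / (n * (n + 1)) := by
  have hca : ∀ k ∈ Icc 1 n, 0 ≤ carlemanWeight k * a k := fun k hk =>
    mul_nonneg (carlemanWeight_nonneg k) (ha k hk)
  have amgm := geom_mean_le_arith_mean (Icc 1 n) (fun _ => 1) _ (fun _ _ => zero_le_one)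
    (by simp [Nat.pos_of_ne_zero hn]) hca
  simp only [rpow_one, one_mul, sum_const, Nat.card_Icc, add_tsub_cancel_right, nsmul_one,
    prod_mul_distrib, prod_carlemanWeight] at amgm
  rw [mul_rpow (by positivity) (prod_nonneg ha), pow_rpow_inv_natCast (by positivity) hn] at amgm
  rw [← sum_div, ← div_div, le_div_iff₀ (by positivity)]
  linarith

theorem carleman_finite {a : ℕ → ℝ} (ha : ∀ k ≥ 1, 0 ≤ a k) (N : ℕ) :
    ∑ n ∈ Icc 1 N, (∏ k ∈ Icc 1 n, a k) ^ (n : ℝ)⁻¹ ≤ exp 1 * ∑ k ∈ Icc 1 N, a k := by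
  calc ∑ n ∈ Icc 1 N, (∏ k ∈ Icc 1 n, a k) ^ (n : ℝ)⁻¹
      ≤ ∑ n ∈ Icc 1 N, ∑ k ∈ Icc 1 n, carlemanWeight k * a k / (n * (n + 1)) :=
        sum_le_sum fun n hn => geom_mean_le_sum_carlemanWeight_mul
          (by simp at hn; omega) fun k hk => ha k (mem_Icc.mp hk).1
    _ = ∑ k ∈ Icc 1 N, ∑ n ∈ Ico k (N + 1), carlemanWeight k * a k / (n * (n + 1)) :=
        sum_comm' fun n k => by simp only [mem_Icc, mem_Ico]; omega
    _ ≤ ∑ k ∈ Icc 1 N, exp 1 * a k := by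
        refine sum_le_sum fun k hk => ?_
        have hk1 := (mem_Icc.mp hk).1
        simp only [div_eq_mul_inv, ← mul_sum]
        rw [mul_right_comm]
        exact mul_le_mul_of_nonneg_right (carlemanWeight_mul_sum_Ico_le hk1 _) (ha k hk1)
    _ = exp 1 * ∑ k ∈ Icc 1 N, a k := (mul_sum _ _ _).symm

lemma sum_range_add_one_eq_sum_Icc {M : Type*} [AddCommMonoid M] (f : ℕ → M) (N : ℕ) :
    ∑ i ∈ range N, f (i + 1) = ∑ k ∈ Icc 1 N, f k := by
  rw [range_eq_Ico, sum_Ico_add', ← Ico_add_one_right_eq_Icc, zero_add]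

/-- Carleman's inequality: `∑ (a_1 ⋯ a_n)^{1/n} ≤ e ∑ a_n`. -/
theorem carleman_inequality
    (a : ℕ → ℝ) (ha : ∀ n ≥ 1, 0 ≤ a n) (hsum : Summable (fun n : ℕ => a (n + 1))) :
    ∑' n : ℕ, (∏ k ∈ Finset.Icc 1 (n + 1), a k) ^ ((1 : ℝ) / (n + 1)) ≤
      Real.exp 1 * ∑' n : ℕ, a (n + 1) := by
  have hexp : ∀ n : ℕ, (1 : ℝ) / (n + 1) = ((n + 1 : ℕ) : ℝ)⁻¹ := by simp
  simp only [hexp]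
  refine tsum_le_of_sum_range_le
    (fun n => rpow_nonneg (prod_nonneg fun k hk => ha k (mem_Icc.mp hk).1) _) fun N => ?_
  rw [sum_range_add_one_eq_sum_Icc (fun n => (∏ k ∈ Icc 1 n, a k) ^ (n : ℝ)⁻¹)]
  calc ∑ n ∈ Icc 1 N, (∏ k ∈ Icc 1 n, a k) ^ (n : ℝ)⁻¹
      ≤ exp 1 * ∑ k ∈ Icc 1 N, a k := carleman_finite ha N
    _ = exp 1 * ∑ i ∈ range N, a (i + 1) := by rw [sum_range_add_one_eq_sum_Icc a]
    _ ≤ exp 1 * ∑' n, a (n + 1) := by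
        gcongr
        exact hsum.sum_le_tsum _ fun i _ => ha (i + 1) (Nat.le_add_left 1 i)
end

section
/- (Cartlidge.) Fix 1 < p < ∞. Let (λ_k)_{k≥1} satisfy λ_k > 0 for all k, set Λ_n = ∑_{k=1}^n λ_k, and suppose L = sup_{n≥1} (Λ_{n+1}/λ_{n+1} − Λ_n/λ_n) satisfies L < p. Then for every complex (or real) sequence (b_n) with ∑_{n=1}^∞ |b_n|^p < ∞, one has ∑_{n=1}^∞ |∑_{k=1}^n λ_k b_k / Λ_n|^p ≤ (p/(p−L))^p · ∑_{n=1}^∞ |b_n|^p. -/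
/-!
With `A n` the weighted means, `t n = Λ n / λ n` and `c = p / (p - L)`, the potential
`g n = c (t (n+1) - 1) |A n| ^ p` satisfies
`g (n+1) - g n ≤ c ^ p |b (n+1)| ^ p - |A (n+1)| ^ p`.
This comes from `t (n+1) |A (n+1)| - (t (n+1) - 1) |A n| ≤ |b (n+1)|` (the triangle inequality
for `Λ n A n = ∑_{k ≤ n} λ k b k`), Young's inequality `p a b ^ (p-1) ≤ a ^ p + (p-1) b ^ p`
applied with `a = c |b (n+1)|` and with `a = |A n|`, and the bound `t (n+2) - t (n+1) ≤ L`.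
Summing, and using `g 0 = 0 ≤ g N`, gives the theorem.
-/

open Finset

namespace Real

theorem young_rpow_sub_one {p a b : ℝ} (hp : 1 < p) (ha : 0 ≤ a) (hb : 0 ≤ b) :
    p * (a * b ^ (p - 1)) ≤ a ^ p + (p - 1) * b ^ p := by
  have hp1 : 0 < p - 1 := by linarith
  have h := young_inequality_of_nonneg ha (rpow_nonneg hb (p - 1))
    (HolderConjugate.conjExponent hp)
  rw [conjExponent, ← rpow_mul hb, mul_div_cancel₀ p hp1.ne'] at h
  calc p * (a * b ^ (p - 1)) ≤ p * (a ^ p / p + b ^ p / (p / (p - 1))) := by gcongr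
    _ = a ^ p + (p - 1) * b ^ p := by field_simp

end Real

theorem lyapunov_step {p c T T' X Y B : ℝ} (hp : 1 < p) (hc : 0 ≤ c) (hT : 1 ≤ T)
    (hX : 0 ≤ X) (hY : 0 ≤ Y) (hB : 0 ≤ B) (hXY : T * X - (T - 1) * Y ≤ B)
    (hT' : p ≤ c * (p - (T' - T))) :
    c * (T' - 1) * X ^ p - c * (T - 1) * Y ^ p ≤ c ^ p * B ^ p - X ^ p := by
  have hXp : X ^ p = X ^ (p - 1) * X := by
    conv_lhs => rw [← sub_add_cancel p 1]
    rw [Real.rpow_add' hX (by simp; linarith), Real.rpow_one]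
  have hyB := Real.young_rpow_sub_one hp (mul_nonneg hc hB) hX
  have hyY := Real.young_rpow_sub_one hp hY hX
  rw [Real.mul_rpow hc hB] at hyB
  have h1 := mul_le_mul_of_nonneg_left (sub_le_iff_le_add.mp hXY)
    (by positivity : 0 ≤ p * c * X ^ (p - 1))
  have h2 := mul_le_mul_of_nonneg_left hyY (mul_nonneg hc (sub_nonneg.2 hT))
  have h3 := mul_le_mul_of_nonneg_right hT' (Real.rpow_nonneg hX p)
  rw [hXp] at h2 h3 hyB ⊢
  linear_combination h1 + hyB + h2 + h3

theorem tsum_le_tsum_of_sub_le_sub {g u v : ℕ → ℝ} (hg0 : g 0 = 0) (hg : ∀ n, 0 ≤ g n)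
    (hu : Summable u) (hu0 : ∀ n, 0 ≤ u n) (hv0 : ∀ n, 0 ≤ v n)
    (hguv : ∀ n, g (n + 1) - g n ≤ u n - v n) :
    ∑' n, v n ≤ ∑' n, u n := by
  refine Real.tsum_le_of_sum_range_le hv0 fun N => ?_
  have htel : g N - g 0 ≤ ∑ n ∈ range N, (u n - v n) := by
    rw [← sum_range_sub]
    exact sum_le_sum fun n _ => hguv n
  rw [sum_sub_distrib, hg0] at htel
  linarith [hg N, hu.sum_le_tsum (range N) fun n _ => hu0 n]

noncomputable def weightSum (lam : ℕ → ℝ) (n : ℕ) : ℝ := ∑ k ∈ Icc 1 n, lam k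

noncomputable def weightRatio (lam : ℕ → ℝ) (n : ℕ) : ℝ := weightSum lam n / lam n

noncomputable def weightedMean (lam b : ℕ → ℝ) (n : ℕ) : ℝ :=
  (∑ k ∈ Icc 1 n, lam k * b k) / weightSum lam n

section WeightedMean

variable {lam : ℕ → ℝ}

theorem weightSum_succ (n : ℕ) :
    weightSum lam (n + 1) = weightSum lam n + lam (n + 1) :=
  sum_Icc_succ_top (Nat.le_add_left 1 n) lam

theorem weightSum_nonneg (hlam : ∀ k ≥ 1, 0 < lam k) (n : ℕ) : 0 ≤ weightSum lam n :=
  sum_nonneg fun k hk => (hlam k (mem_Icc.mp hk).1).le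

theorem weightRatio_succ_sub_one (hlam : ∀ k ≥ 1, 0 < lam k) (n : ℕ) :
    weightRatio lam (n + 1) - 1 = weightSum lam n / lam (n + 1) := by
  have := hlam (n + 1) (Nat.le_add_left 1 n)
  rw [weightRatio, weightSum_succ]
  field_simp
  ring

theorem one_le_weightRatio_succ (hlam : ∀ k ≥ 1, 0 < lam k) (n : ℕ) :
    1 ≤ weightRatio lam (n + 1) := by
  have := weightRatio_succ_sub_one hlam n
  have := div_nonneg (weightSum_nonneg hlam n) (hlam (n + 1) (Nat.le_add_left 1 n)).le
  linarith

theorem weightSum_mul_abs_weightedMean (hlam : ∀ k ≥ 1, 0 < lam k) (b : ℕ → ℝ) (n : ℕ) :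
    weightSum lam n * |weightedMean lam b n| = |∑ k ∈ Icc 1 n, lam k * b k| := by
  rcases n with _ | n
  · simp [weightSum]
  · have := hlam (n + 1) (Nat.le_add_left 1 n)
    have hpos : 0 < weightSum lam (n + 1) := by
      rw [weightSum_succ]; linarith [weightSum_nonneg hlam n]
    rw [weightedMean, abs_div, abs_of_pos hpos, mul_div_cancel₀ _ hpos.ne']

theorem weightRatio_mul_abs_weightedMean_sub_le (hlam : ∀ k ≥ 1, 0 < lam k) (b : ℕ → ℝ)
    (n : ℕ) :
    weightRatio lam (n + 1) * |weightedMean lam b (n + 1)| -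
        (weightRatio lam (n + 1) - 1) * |weightedMean lam b n| ≤ |b (n + 1)| := by
  have hl := hlam (n + 1) (Nat.le_add_left 1 n)
  have hΛ : weightSum lam (n + 1) * |weightedMean lam b (n + 1)| -
      weightSum lam n * |weightedMean lam b n| ≤ lam (n + 1) * |b (n + 1)| := by
    rw [weightSum_mul_abs_weightedMean hlam, weightSum_mul_abs_weightedMean hlam,
      sum_Icc_succ_top (Nat.le_add_left 1 n)]
    have h := abs_sub_abs_le_abs_sub (∑ k ∈ Icc 1 n, lam k * b k + lam (n + 1) * b (n + 1))
      (∑ k ∈ Icc 1 n, lam k * b k)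
    rwa [add_sub_cancel_left, abs_mul, abs_of_pos hl] at h
  rw [weightRatio_succ_sub_one hlam, weightRatio, div_mul_eq_mul_div, div_mul_eq_mul_div,
    ← sub_div, div_le_iff₀ hl]
  linarith

end WeightedMean

/-- Cartlidge's theorem: if `L = sup_n (Λ_{n+1}/λ_{n+1} - Λ_n/λ_n) < p`, then the
weighted mean matrix has `ℓ^p` operator norm at most `p/(p-L)`. -/
theorem cartlidge (p : ℝ) (hp : 1 < p)
    (lam : ℕ → ℝ) (hlam : ∀ k ≥ 1, 0 < lam k)
    (Lam : ℕ → ℝ) (hLam : ∀ n, Lam n = ∑ k ∈ Finset.Icc 1 n, lam k)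
    (L : ℝ)
    (hL : IsLUB {x : ℝ | ∃ n ≥ 1,
        x = Lam (n + 1) / lam (n + 1) - Lam n / lam n} L)
    (hLp : L < p)
    (b : ℕ → ℝ) (hb : Summable (fun n : ℕ => |b (n + 1)| ^ p)) :
    ∑' n : ℕ, |∑ k ∈ Finset.Icc 1 (n + 1), lam k * b k / Lam (n + 1)| ^ p ≤
      (p / (p - L)) ^ p * ∑' n : ℕ, |b (n + 1)| ^ p := by
  obtain rfl : Lam = weightSum lam := funext hLam
  set c := p / (p - L)
  have hc : 0 ≤ c := div_nonneg (by linarith) (by linarith)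
  have hdrift (n : ℕ) : p ≤ c * (p - (weightRatio lam (n + 2) - weightRatio lam (n + 1))) := by
    have hΔ : weightRatio lam (n + 2) - weightRatio lam (n + 1) ≤ L :=
      hL.1 ⟨n + 1, by omega, rfl⟩
    calc p = c * (p - L) := (div_mul_cancel₀ p (by linarith)).symm
      _ ≤ _ := by gcongr
  simp_rw [← sum_div]
  rw [← tsum_mul_left]
  refine tsum_le_tsum_of_sub_le_sub
    (g := fun n => c * (weightRatio lam (n + 1) - 1) * |weightedMean lam b n| ^ p)
    (v := fun n => |weightedMean lam b (n + 1)| ^ p) ?_ (fun n => ?_) (hb.mul_left _)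
    (fun n => by positivity) (fun n => by positivity) (fun n => ?_)
  · simp [weightedMean, weightSum, Real.zero_rpow (by linarith : p ≠ 0)]
  · have := sub_nonneg.2 (one_le_weightRatio_succ hlam n)
    positivity
  · exact lyapunov_step hp hc (one_le_weightRatio_succ hlam n) (abs_nonneg _) (abs_nonneg _)
      (abs_nonneg _) (weightRatio_mul_abs_weightedMean_sub_le hlam b n) (hdrift n)
end

section
/- Let (λ_k)_{k≥1} satisfy λ_k > 0 for all k, set Λ_n = ∑_{k=1}^n λ_k, and suppose L = sup_{n≥1} (Λ_{n+1}/λ_{n+1} − Λ_n/λ_n) is finite. Then for every sequence (a_n)_{n≥1} of non-negative real numbers with ∑_{n=1}^∞ a_n convergent, one has ∑_{n=1}^∞ ∏_{k=1}^n a_k^{λ_k/Λ_n} ≤ e^L · ∑_{n=1}^∞ a_n. -/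
/-!
Carleman's argument with multipliers. Write `T k = Λ_k / λ_k` and `c k = e^L T k`. From
`T (k+1) ≤ T k + L ≤ T k · exp (L λ_k / Λ_k)` one gets inductively
`T (m+1) ^ Λ_m ≤ ∏_{k ≤ m} c k ^ λ_k`, so weighted AM-GM applied to `c k · a k` gives
`T (m+1) · G_m ≤ Λ_m⁻¹ ∑_{k ≤ m} λ_k c k a k = e^L Λ_m⁻¹ ∑_{k ≤ m} Λ_k a k`.
Since `(Λ_m T (m+1))⁻¹ = Λ_m⁻¹ - Λ_{m+1}⁻¹`, summing over `m` telescopes (Abel summation)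
to at most `e^L ∑ a k`.
-/

open Finset Real

theorem sum_range_comp_succ_eq_sum_Icc {M : Type*} [AddCommMonoid M] (f : ℕ → M) (N : ℕ) :
    ∑ i ∈ range N, f (i + 1) = ∑ m ∈ Icc 1 N, f m := by
  rw [range_eq_Ico, sum_Ico_add', ← Ico_add_one_right_eq_Icc]

theorem sum_inv_sub_inv_mul_sum_Icc {K : Type*} [Field K] {Λ : ℕ → K} (hΛ : ∀ n ≥ 1, Λ n ≠ 0)
    (b : ℕ → K) (N : ℕ) :
    ∑ m ∈ Icc 1 N, ((Λ m)⁻¹ - (Λ (m + 1))⁻¹) * ∑ k ∈ Icc 1 m, Λ k * b k =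
      ∑ k ∈ Icc 1 N, b k - (∑ k ∈ Icc 1 N, Λ k * b k) / Λ (N + 1) := by
  induction N with
  | zero => simp
  | succ N ih =>
    have hN := hΛ (N + 1) (by omega)
    simp only [sum_Icc_succ_top (Nat.le_add_left 1 N), ih]
    field_simp
    ring

theorem rpow_le_exp_mul_rpow_of_le_add {x y L p : ℝ} (hx : 0 ≤ x) (hy : 0 < y) (hp : 0 ≤ p)
    (h : x ≤ y + L) : x ^ p ≤ exp (L * p / y) * y ^ p := by
  have hxy : x ≤ exp (L / y) * y :=
    calc x ≤ (L / y + 1) * y := by rwa [add_one_mul, div_mul_cancel₀ _ hy.ne', add_comm]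
      _ ≤ exp (L / y) * y := by gcongr; exact add_one_le_exp _
  calc x ^ p ≤ (exp (L / y) * y) ^ p := by gcongr
    _ = exp (L * p / y) * y ^ p := by
      rw [mul_rpow (exp_pos _).le hy.le, ← exp_mul, div_mul_eq_mul_div]

section Weights

variable {lam Lam : ℕ → ℝ}

theorem Lam_succ (hLam : ∀ n, Lam n = ∑ k ∈ Icc 1 n, lam k) (n : ℕ) :
    Lam (n + 1) = Lam n + lam (n + 1) := by
  rw [hLam, hLam, sum_Icc_succ_top (Nat.le_add_left 1 n)]

theorem Lam_pos (hlam : ∀ k ≥ 1, 0 < lam k) (hLam : ∀ n, Lam n = ∑ k ∈ Icc 1 n, lam k)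
    {n : ℕ} (hn : 1 ≤ n) : 0 < Lam n := by
  rw [hLam]
  exact sum_pos (fun k hk => hlam k (mem_Icc.1 hk).1) (nonempty_Icc.2 hn)

theorem rpow_Lam_le_prod (hlam : ∀ k ≥ 1, 0 < lam k) (hLam : ∀ n, Lam n = ∑ k ∈ Icc 1 n, lam k)
    {L : ℝ} (hL : ∀ n ≥ 1, Lam (n + 1) / lam (n + 1) - Lam n / lam n ≤ L) (m : ℕ) :
    (Lam (m + 1) / lam (m + 1)) ^ Lam m ≤ ∏ k ∈ Icc 1 m, (exp L * (Lam k / lam k)) ^ lam k := by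
  induction m with
  | zero => simp [hLam]
  | succ m ih =>
    have hlam₁ := hlam (m + 1) (by omega)
    have hLam₁ := Lam_pos hlam hLam (Nat.le_add_left 1 m)
    have hT₁ : 0 < Lam (m + 1) / lam (m + 1) := div_pos hLam₁ hlam₁
    have hT₂ : 0 < Lam (m + 2) / lam (m + 2) :=
      div_pos (Lam_pos hlam hLam (by omega)) (hlam (m + 2) (by omega))
    calc (Lam (m + 2) / lam (m + 2)) ^ Lam (m + 1)
        ≤ exp (L * lam (m + 1)) * (Lam (m + 1) / lam (m + 1)) ^ Lam (m + 1) := by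
          have hexp : L * Lam (m + 1) / (Lam (m + 1) / lam (m + 1)) = L * lam (m + 1) := by
            field_simp
          rw [← hexp]
          exact rpow_le_exp_mul_rpow_of_le_add hT₂.le hT₁ hLam₁.le
            (by linarith [hL (m + 1) (by omega)])
      _ = (exp L * (Lam (m + 1) / lam (m + 1))) ^ lam (m + 1) *
            (Lam (m + 1) / lam (m + 1)) ^ Lam m := by
          rw [mul_rpow (exp_pos L).le hT₁.le, ← exp_mul, mul_assoc, ← rpow_add hT₁]
          congr 2
          linarith [Lam_succ hLam m]
      _ ≤ (exp L * (Lam (m + 1) / lam (m + 1))) ^ lam (m + 1) *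
            ∏ k ∈ Icc 1 m, (exp L * (Lam k / lam k)) ^ lam k := by gcongr
      _ = ∏ k ∈ Icc 1 (m + 1), (exp L * (Lam k / lam k)) ^ lam k := by
          rw [prod_Icc_succ_top (Nat.le_add_left 1 m), mul_comm]

theorem le_prod_rpow_div_Lam (hlam : ∀ k ≥ 1, 0 < lam k)
    (hLam : ∀ n, Lam n = ∑ k ∈ Icc 1 n, lam k)
    {L : ℝ} (hL : ∀ n ≥ 1, Lam (n + 1) / lam (n + 1) - Lam n / lam n ≤ L) {m : ℕ} (hm : 1 ≤ m) :
    Lam (m + 1) / lam (m + 1) ≤ ∏ k ∈ Icc 1 m, (exp L * (Lam k / lam k)) ^ (lam k / Lam m) := by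
  have hLam_m := Lam_pos hlam hLam hm
  have hT : 0 < Lam (m + 1) / lam (m + 1) :=
    div_pos (Lam_pos hlam hLam (by omega)) (hlam (m + 1) (by omega))
  have hc : ∀ k ∈ Icc 1 m, 0 < exp L * (Lam k / lam k) := fun k hk =>
    mul_pos (exp_pos L) (div_pos (Lam_pos hlam hLam (mem_Icc.1 hk).1) (hlam k (mem_Icc.1 hk).1))
  calc Lam (m + 1) / lam (m + 1)
      = ((Lam (m + 1) / lam (m + 1)) ^ Lam m) ^ (Lam m)⁻¹ := by
        rw [← rpow_mul hT.le, mul_inv_cancel₀ hLam_m.ne', rpow_one]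
    _ ≤ (∏ k ∈ Icc 1 m, (exp L * (Lam k / lam k)) ^ lam k) ^ (Lam m)⁻¹ := by
        gcongr
        exact rpow_Lam_le_prod hlam hLam hL m
    _ = ∏ k ∈ Icc 1 m, (exp L * (Lam k / lam k)) ^ (lam k / Lam m) := by
        rw [← finsetProd_rpow _ _ fun k hk => rpow_nonneg (hc k hk).le _]
        refine prod_congr rfl fun k hk => ?_
        rw [← rpow_mul (hc k hk).le, ← div_eq_mul_inv]

theorem prod_rpow_div_Lam_le (hlam : ∀ k ≥ 1, 0 < lam k)
    (hLam : ∀ n, Lam n = ∑ k ∈ Icc 1 n, lam k)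
    {L : ℝ} (hL : ∀ n ≥ 1, Lam (n + 1) / lam (n + 1) - Lam n / lam n ≤ L)
    {a : ℕ → ℝ} (ha : ∀ k ≥ 1, 0 ≤ a k) {m : ℕ} (hm : 1 ≤ m) :
    ∏ k ∈ Icc 1 m, a k ^ (lam k / Lam m) ≤
      ((Lam m)⁻¹ - (Lam (m + 1))⁻¹) * ∑ k ∈ Icc 1 m, Lam k * (exp L * a k) := by
  have hLam_m := Lam_pos hlam hLam hm
  have hLam_m₁ := Lam_pos hlam hLam (Nat.le_add_left 1 m)
  have hlam_m₁ := hlam (m + 1) (by omega)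
  set c : ℕ → ℝ := fun k => exp L * (Lam k / lam k)
  have hc : ∀ k ∈ Icc 1 m, 0 ≤ c k := fun k hk =>
    mul_nonneg (exp_pos L).le (div_nonneg (Lam_pos hlam hLam (mem_Icc.1 hk).1).le
      (hlam k (mem_Icc.1 hk).1).le)
  have amgm := geom_mean_le_arith_mean_weighted (Icc 1 m) (fun k => lam k / Lam m)
    (fun k => c k * a k) (fun k hk => div_nonneg (hlam k (mem_Icc.1 hk).1).le hLam_m.le)
    (by rw [← sum_div, ← hLam, div_self hLam_m.ne'])
    (fun k hk => mul_nonneg (hc k hk) (ha k (mem_Icc.1 hk).1))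
  have hgeom : ∏ k ∈ Icc 1 m, (c k * a k) ^ (lam k / Lam m) =
      (∏ k ∈ Icc 1 m, c k ^ (lam k / Lam m)) * ∏ k ∈ Icc 1 m, a k ^ (lam k / Lam m) := by
    rw [← prod_mul_distrib]
    exact prod_congr rfl fun k hk => mul_rpow (hc k hk) (ha k (mem_Icc.1 hk).1)
  have harith : ∑ k ∈ Icc 1 m, lam k / Lam m * (c k * a k) =
      (Lam m)⁻¹ * ∑ k ∈ Icc 1 m, Lam k * (exp L * a k) := by
    rw [mul_sum]
    refine sum_congr rfl fun k hk => ?_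
    have := (hlam k (mem_Icc.1 hk).1).ne'
    simp only [c]
    field_simp
  have hkey : Lam (m + 1) / lam (m + 1) * ∏ k ∈ Icc 1 m, a k ^ (lam k / Lam m) ≤
      (Lam m)⁻¹ * ∑ k ∈ Icc 1 m, Lam k * (exp L * a k) := by
    calc _ ≤ (∏ k ∈ Icc 1 m, c k ^ (lam k / Lam m)) * ∏ k ∈ Icc 1 m, a k ^ (lam k / Lam m) := by
          gcongr
          · exact prod_nonneg fun k hk => rpow_nonneg (ha k (mem_Icc.1 hk).1) _
          · exact le_prod_rpow_div_Lam hlam hLam hL hm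
      _ ≤ _ := by rw [← hgeom, ← harith]; exact amgm
  have htelescope : (Lam m)⁻¹ / (Lam (m + 1) / lam (m + 1)) = (Lam m)⁻¹ - (Lam (m + 1))⁻¹ := by
    field_simp
    linarith [Lam_succ hLam m]
  rw [← htelescope, div_mul_eq_mul_div, le_div_iff₀ (div_pos hLam_m₁ hlam_m₁), mul_comm]
  exact hkey

end Weights

/-- If `L = sup_n (Λ_{n+1}/λ_{n+1} - Λ_n/λ_n)` is finite, then the weighted
Carleman inequality holds with constant `e^L`. -/
theorem weighted_carleman_of_L
    (lam : ℕ → ℝ) (hlam : ∀ k ≥ 1, 0 < lam k)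
    (Lam : ℕ → ℝ) (hLam : ∀ n, Lam n = ∑ k ∈ Finset.Icc 1 n, lam k)
    (L : ℝ)
    (hL : IsLUB {x : ℝ | ∃ n ≥ 1,
        x = Lam (n + 1) / lam (n + 1) - Lam n / lam n} L)
    (a : ℕ → ℝ) (ha : ∀ n ≥ 1, 0 ≤ a n) (hsum : Summable (fun n : ℕ => a (n + 1))) :
    ∑' n : ℕ, ∏ k ∈ Finset.Icc 1 (n + 1), a k ^ (lam k / Lam (n + 1)) ≤
      Real.exp L * ∑' n : ℕ, a (n + 1) := by
  have hdiff : ∀ n ≥ 1, Lam (n + 1) / lam (n + 1) - Lam n / lam n ≤ L :=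
    fun n hn => hL.1 ⟨n, hn, rfl⟩
  refine tsum_le_of_sum_range_le
    (fun n => prod_nonneg fun k hk => rpow_nonneg (ha k (mem_Icc.1 hk).1) _) fun N => ?_
  calc ∑ n ∈ range N, ∏ k ∈ Icc 1 (n + 1), a k ^ (lam k / Lam (n + 1))
      = ∑ m ∈ Icc 1 N, ∏ k ∈ Icc 1 m, a k ^ (lam k / Lam m) :=
        sum_range_comp_succ_eq_sum_Icc (fun m => ∏ k ∈ Icc 1 m, a k ^ (lam k / Lam m)) N
    _ ≤ ∑ m ∈ Icc 1 N, ((Lam m)⁻¹ - (Lam (m + 1))⁻¹) * ∑ k ∈ Icc 1 m, Lam k * (exp L * a k) :=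
        sum_le_sum fun m hm => prod_rpow_div_Lam_le hlam hLam hdiff ha (mem_Icc.1 hm).1
    _ = ∑ k ∈ Icc 1 N, exp L * a k - (∑ k ∈ Icc 1 N, Lam k * (exp L * a k)) / Lam (N + 1) :=
        sum_inv_sub_inv_mul_sum_Icc (fun n hn => (Lam_pos hlam hLam hn).ne') _ N
    _ ≤ ∑ k ∈ Icc 1 N, exp L * a k := by
        refine sub_le_self _
          (div_nonneg (sum_nonneg fun k hk => ?_) (Lam_pos hlam hLam (by omega)).le)
        have hk := (mem_Icc.1 hk).1
        exact mul_nonneg (Lam_pos hlam hLam hk).le (mul_nonneg (exp_pos L).le (ha k hk))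
    _ = exp L * ∑ n ∈ range N, a (n + 1) := by rw [← mul_sum, sum_range_comp_succ_eq_sum_Icc a N]
    _ ≤ exp L * ∑' n, a (n + 1) := by
        gcongr
        exact hsum.sum_le_tsum _ fun n _ => ha (n + 1) (by omega)
end
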